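/- Let n ≥ 2, let D ∈ ℝ^{n×n} be symmetric, let Π ∈ ℝ^{n×n} be a permutation matrix, and set C := Πᵀ D Π. Then OGW(C,D) = 0, OGW_lb(C,D) = 0, and OGW_o(C,D) = 0, where OGW(C,D) := (1/n²)(‖C‖_F² + ‖D‖_F² − 2·sup_{P ∈ O_n ∩ E_n} tr(C P D Pᵀ)), OGW_o(C,D) := (1/n²)(‖C‖_F² + ‖D‖_F² − 2·sup_{P ∈ O_n} tr(C P D Pᵀ)), and OGW_lb(C,D) := (1/n²)·[ ‖C‖_F² + ‖D‖_F² − 2·Σ_{i=1}^{n−1} λᵢ↓(Vᵀ C V)·λᵢ↓(Vᵀ D V) − (4/n)·‖Vᵀ C 1‖·‖Vᵀ D 1‖ − (2/n²)·(1ᵀ C 1)(1ᵀ D 1) ] for a fixed V ∈ ℝ^{n×(n−1)} with Vᵀ·1 = 0 and Vᵀ V = I_{n−1}. -/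

import Mathlib

open Matrix BigOperators

noncomputable section

/-- Squared Frobenius norm of a real matrix. -/
def frobSq {m n : ℕ} (A : Matrix (Fin m) (Fin n) ℝ) : ℝ := ∑ i, ∑ j, (A i j) ^ 2

/-- Euclidean norm of a real vector. -/
def vnorm {n : ℕ} (v : Fin n → ℝ) : ℝ := Real.sqrt (∑ i, (v i) ^ 2)

/-- Eigenvalues of a real symmetric (Hermitian) matrix, listed in descending order. -/
def eigDesc {n : ℕ} {A : Matrix (Fin n) (Fin n) ℝ} (hA : A.IsHermitian) : Fin n → ℝ :=
  fun i => (hA.eigenvalues ∘ Tuple.sort hA.eigenvalues) i.rev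

/-- Conjugating a real symmetric (Hermitian) matrix preserves symmetry. -/
theorem conjHerm {n m : ℕ} (V : Matrix (Fin n) (Fin m) ℝ) {C : Matrix (Fin n) (Fin n) ℝ}
    (hC : C.IsHermitian) : (Vᵀ * C * V).IsHermitian := by
  have h := Matrix.isHermitian_mul_mul_conjTranspose Vᵀ hC
  simpa using h


/-- The set `O_n ∩ E_n` of orthogonal matrices whose row and column sums all equal `1`. -/
def OE (n : ℕ) : Set (Matrix (Fin n) (Fin n) ℝ) :=
  {P | Pᵀ * P = 1 ∧ (P *ᵥ (fun _ => (1 : ℝ)) = fun _ => 1)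
    ∧ (Pᵀ *ᵥ (fun _ => (1 : ℝ)) = fun _ => 1)}

/-- The orthogonal Gromov-Wasserstein discrepancy `OGW`. -/
def OGW (n : ℕ) (C D : Matrix (Fin n) (Fin n) ℝ) : ℝ :=
  (1 / (n : ℝ) ^ 2) * (frobSq C + frobSq D
    - 2 * sSup ((fun P => Matrix.trace (C * P * D * Pᵀ)) '' (OE n)))


/-- The closed-form lower bound `OGW_lb` of the orthogonal Gromov-Wasserstein discrepancy. -/
def OGWlb {n : ℕ} (V : Matrix (Fin n) (Fin (n - 1)) ℝ)
    (C D : Matrix (Fin n) (Fin n) ℝ) (hC : C.IsHermitian) (hD : D.IsHermitian) : ℝ :=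
  (1 / (n : ℝ) ^ 2) * (frobSq C + frobSq D
    - 2 * ∑ i, eigDesc (conjHerm V hC) i * eigDesc (conjHerm V hD) i
    - (4 / (n : ℝ)) * vnorm ((Vᵀ * C) *ᵥ (fun _ => (1 : ℝ)))
        * vnorm ((Vᵀ * D) *ᵥ (fun _ => (1 : ℝ)))
    - (2 / (n : ℝ) ^ 2) * ((∑ i, ∑ j, C i j) * (∑ i, ∑ j, D i j)))


/-- The relaxation `OGW_o`, optimizing the coupling over all orthogonal matrices. -/
def OGWo (n : ℕ) (C D : Matrix (Fin n) (Fin n) ℝ) : ℝ :=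
  (1 / (n : ℝ) ^ 2) * (frobSq C + frobSq D
    - 2 * sSup ((fun P => Matrix.trace (C * P * D * Pᵀ)) ''
        {P : Matrix (Fin n) (Fin n) ℝ | Pᵀ * P = 1}))


/-! The permutation `Pmᵀ` lies in `O_n ∩ E_n` and attains the Cauchy–Schwarz bound
`tr (C P D Pᵀ) ≤ (‖C‖² + ‖D‖²) / 2`, so both suprema equal `‖D‖²` and `OGW`, `OGW_o` vanish.
For `OGW_lb`: the columns of `V` are an orthonormal basis of `1^⊥`, so `V Vᵀ = I - 11ᵀ/n`. An
orthogonal matrix fixing `1` commutes with this projection, hence `Vᵀ C V` and `Vᵀ D V` have the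
same spectrum and `‖Vᵀ C 1‖ = ‖Vᵀ D 1‖`; the bound then collapses by the Pythagorean splitting
`‖D‖² = ‖Vᵀ D V‖² + (2/n) ‖Vᵀ D 1‖² + (1ᵀ D 1)² / n²` of a symmetric `D` along `range V ⊕ ℝ 1`. -/

namespace Matrix

variable {ι κ R : Type*} [Fintype ι] [Fintype κ] [CommRing R]

theorem charpoly_transpose_mul_conj_mul [DecidableEq ι] [DecidableEq κ] {V : Matrix ι κ R}
    {P : Matrix ι ι R} (hP : P * (V * Vᵀ) * Pᵀ = V * Vᵀ) (D : Matrix ι ι R) :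
    (Vᵀ * (Pᵀ * D * P) * V).charpoly = (Vᵀ * D * V).charpoly := by
  -- up to the same power of `X`, both sides equal `χ (D · V Vᵀ)` by `charpoly_mul_comm'`
  refine (Polynomial.isRegular_X_pow (Fintype.card ι)).left.eq_iff.mp ?_
  have hconj := charpoly_mul_comm' (Vᵀ * Pᵀ) (D * P * V)
  have hplain := charpoly_mul_comm' Vᵀ (D * V)
  simp only [Matrix.mul_assoc] at hconj hplain ⊢
  rw [hconj, hplain, ← hP]
  simp only [Matrix.mul_assoc]

theorem mul_vecMulVec_one_mul_transpose {P : Matrix ι ι R} (hP1 : P *ᵥ 1 = 1) :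
    P * vecMulVec 1 1 * Pᵀ = vecMulVec 1 1 := by
  rw [mul_vecMulVec, hP1, vecMulVec_mul, vecMul_transpose, hP1]

theorem dotProduct_transpose_mulVec_self (B : Matrix ι κ R) (x : ι → R) :
    (Bᵀ *ᵥ x) ⬝ᵥ (Bᵀ *ᵥ x) = x ⬝ᵥ ((B * Bᵀ) *ᵥ x) := by
  rw [← mulVec_mulVec, dotProduct_mulVec x, ← mulVec_transpose]

theorem trace_transpose_mul_mul_mul_vecMulVec_one (A Y : Matrix ι ι R) :
    trace (Aᵀ * Y * A * vecMulVec 1 1) = (A *ᵥ 1) ⬝ᵥ (Y *ᵥ (A *ᵥ 1)) := by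
  rw [mul_vecMulVec, trace_vecMulVec, dotProduct_comm, ← mulVec_mulVec, ← mulVec_mulVec,
    dotProduct_mulVec, vecMul_transpose]

theorem one_dotProduct_mulVec_one (A : Matrix ι ι R) :
    1 ⬝ᵥ (A *ᵥ 1) = ∑ i, ∑ j, A i j := by
  simp [dotProduct, mulVec]

variable [DecidableEq ι]

theorem IsHermitian.trace_mul_self {𝕜 : Type*} [RCLike 𝕜] {A : Matrix ι ι 𝕜}
    (hA : A.IsHermitian) : trace (A * A) = ∑ i, (hA.eigenvalues i : 𝕜) ^ 2 := by
  conv_lhs => rw [hA.spectral_theorem]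
  rw [← map_mul, Unitary.conjStarAlgAut_apply, trace_mul_cycle, Unitary.coe_star_mul_self,
    Matrix.one_mul, diagonal_mul_diagonal, trace_diagonal]
  simp [sq]

/-- `N := 1 - 11ᵀ/|ι| - V Vᵀ` is a symmetric idempotent of trace `0`, hence `Nᵀ N = N = 0`. -/
theorem mul_transpose_eq_one_sub_smul_vecMulVec_one [DecidableEq κ] {V : Matrix ι κ ℝ}
    (hV1 : Vᵀ *ᵥ 1 = 0) (hV2 : Vᵀ * V = 1) (hcard : Fintype.card ι = Fintype.card κ + 1) :
    V * Vᵀ = 1 - (Fintype.card ι : ℝ)⁻¹ • vecMulVec 1 1 := by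
  set c : ℝ := (Fintype.card ι : ℝ)⁻¹
  set J : Matrix ι ι ℝ := vecMulVec 1 1
  set N := 1 - c • J - V * Vᵀ
  have hc : c * Fintype.card ι = 1 := inv_mul_cancel₀ (by rw [hcard]; positivity)
  have hJV : J * (V * Vᵀ) = 0 := by
    rw [← Matrix.mul_assoc, vecMulVec_mul, ← mulVec_transpose, hV1]
    simp
  have hVJ : V * Vᵀ * J = 0 := by
    rw [Matrix.mul_assoc, mul_vecMulVec, hV1]
    simp
  have hVV : V * Vᵀ * (V * Vᵀ) = V * Vᵀ := by
    rw [Matrix.mul_assoc, ← Matrix.mul_assoc Vᵀ, hV2, Matrix.one_mul]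
  have hJJ : J * J = (Fintype.card ι : ℝ) • J := by
    rw [vecMulVec_mul_vecMulVec, dotProduct_one]
    simp [J]
  have hNN : N * N = N := by
    simp only [N, sub_mul, mul_sub, Matrix.one_mul, Matrix.mul_one, smul_mul_assoc,
      mul_smul_comm, hJJ, hJV, hVJ, hVV, smul_smul, hc]
    module
  have hN : Nᵀ = N := by
    simp only [N, J, transpose_sub, transpose_one, transpose_smul, transpose_vecMulVec,
      transpose_mul, transpose_transpose]
  have htrace : trace N = 0 := by
    simp only [N, J, trace_sub, trace_one, trace_smul, trace_vecMulVec, dotProduct_one,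
      Pi.one_apply, Finset.sum_const, Finset.card_univ, nsmul_eq_mul, mul_one, smul_eq_mul,
      trace_mul_comm V, hV2, hc]
    rw [hcard]
    push_cast
    ring
  have hzero : N = 0 := by
    rw [← trace_conjTranspose_mul_self_eq_zero_iff, conjTranspose_eq_transpose_of_trivial, hN, hNN,
      htrace]
  exact (sub_eq_zero.mp hzero).symm

end Matrix

section Frobenius

variable {m n : ℕ}

theorem frobSq_eq_trace (A : Matrix (Fin m) (Fin n) ℝ) : frobSq A = trace (Aᵀ * A) := by
  simp only [frobSq, trace, diag_apply, mul_apply, transpose_apply, sq]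
  exact Finset.sum_comm

theorem trace_mul_transpose_le (A B : Matrix (Fin m) (Fin n) ℝ) :
    trace (A * Bᵀ) ≤ (frobSq A + frobSq B) / 2 := by
  simp only [frobSq, trace, diag_apply, mul_apply, transpose_apply, ← Finset.sum_add_distrib,
    Finset.sum_div]
  gcongr with i _ j _
  linarith [two_mul_le_add_sq (A i j) (B i j)]

theorem frobSq_transpose_mul_mul {P : Matrix (Fin n) (Fin n) ℝ} (hP : P * Pᵀ = 1)
    (A : Matrix (Fin n) (Fin n) ℝ) : frobSq (Pᵀ * A * P) = frobSq A := by
  rw [frobSq_eq_trace, frobSq_eq_trace, transpose_mul, transpose_mul, transpose_transpose]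
  simp only [Matrix.mul_assoc]
  rw [← Matrix.mul_assoc P, hP, Matrix.one_mul, trace_mul_comm]
  simp only [Matrix.mul_assoc, hP, Matrix.mul_one]

theorem frobSq_eq_sum_eigenvalues_sq {A : Matrix (Fin n) (Fin n) ℝ} (hA : A.IsHermitian) :
    frobSq A = ∑ i, hA.eigenvalues i ^ 2 := by
  have hAt : Aᵀ = A := (conjTranspose_eq_transpose_of_trivial A).symm.trans hA
  rw [frobSq_eq_trace, hAt, hA.trace_mul_self]
  rfl

theorem vnorm_sq (v : Fin n → ℝ) : vnorm v ^ 2 = v ⬝ᵥ v := by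
  rw [vnorm, Real.sq_sqrt (by positivity)]
  simp [dotProduct, sq]

theorem vnorm_transpose_mulVec (B : Matrix (Fin n) (Fin m) ℝ) (x : Fin n → ℝ) :
    vnorm (Bᵀ *ᵥ x) = √(x ⬝ᵥ ((B * Bᵀ) *ᵥ x)) := by
  rw [← dotProduct_transpose_mulVec_self, ← vnorm_sq]
  exact (Real.sqrt_sq (Real.sqrt_nonneg _)).symm

/-- Insert `1 = V Vᵀ + 11ᵀ/n` twice into `‖D‖² = tr (Dᵀ · 1 · D · 1)` and expand. -/
theorem frobSq_eq_of_mul_transpose_eq {V : Matrix (Fin n) (Fin m) ℝ}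
    (hV : V * Vᵀ = 1 - (n : ℝ)⁻¹ • vecMulVec 1 1) (D : Matrix (Fin n) (Fin n) ℝ) :
    frobSq D = frobSq (Vᵀ * D * V) + (n : ℝ)⁻¹ * vnorm ((Vᵀ * D) *ᵥ 1) ^ 2
      + (n : ℝ)⁻¹ * vnorm ((Vᵀ * Dᵀ) *ᵥ 1) ^ 2 + (n : ℝ)⁻¹ ^ 2 * (∑ i, ∑ j, D i j) ^ 2 := by
  set c : ℝ := (n : ℝ)⁻¹
  set J : Matrix (Fin n) (Fin n) ℝ := vecMulVec 1 1
  have hR : V * Vᵀ + c • J = 1 := by rw [hV]; abel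
  have hPP : trace (Dᵀ * (V * Vᵀ) * D * (V * Vᵀ)) = frobSq (Vᵀ * D * V) := by
    rw [frobSq_eq_trace, transpose_mul, transpose_mul, transpose_transpose]
    simp only [Matrix.mul_assoc]
    rw [trace_mul_comm Vᵀ]
    simp only [Matrix.mul_assoc]
  have hquad (A : Matrix (Fin n) (Fin n) ℝ) :
      trace (Aᵀ * (V * Vᵀ) * A * J) = vnorm ((Vᵀ * A) *ᵥ 1) ^ 2 := by
    rw [trace_transpose_mul_mul_mul_vecMulVec_one, vnorm_sq, ← dotProduct_transpose_mulVec_self,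
      mulVec_mulVec]
  have hJP : trace (Dᵀ * J * D * (V * Vᵀ)) = vnorm ((Vᵀ * Dᵀ) *ᵥ 1) ^ 2 := by
    rw [Matrix.mul_assoc, trace_mul_comm, ← hquad, transpose_transpose]
    simp only [Matrix.mul_assoc]
  have hJJ : trace (Dᵀ * J * D * J) = (∑ i, ∑ j, D i j) ^ 2 := by
    rw [trace_transpose_mul_mul_mul_vecMulVec_one, vecMulVec_mulVec, ← one_dotProduct_mulVec_one]
    simp [sq, dotProduct_comm]
  calc frobSq D = trace (Dᵀ * (V * Vᵀ + c • J) * D * (V * Vᵀ + c • J)) := by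
        rw [hR, frobSq_eq_trace, Matrix.mul_one, Matrix.mul_one]
    _ = _ := by
        simp only [Matrix.mul_add, Matrix.add_mul, trace_add, Matrix.mul_smul, Matrix.smul_mul,
          trace_smul, smul_eq_mul, hPP, hquad, hJP, hJJ]
        ring

end Frobenius

section Eigenvalues

variable {n : ℕ} {A B : Matrix (Fin n) (Fin n) ℝ}

theorem eigDesc_eq_of_charpoly_eq (hA : A.IsHermitian) (hB : B.IsHermitian)
    (h : A.charpoly = B.charpoly) : eigDesc hA = eigDesc hB := by
  unfold eigDesc
  rw [(hA.eigenvalues_eq_eigenvalues_iff hB).2 h]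

theorem sum_eigDesc_mul_self (hA : A.IsHermitian) :
    ∑ i, eigDesc hA i * eigDesc hA i = frobSq A := by
  simp only [frobSq_eq_sum_eigenvalues_sq hA, eigDesc, Function.comp_apply, sq]
  exact (Fin.revPerm.trans (Tuple.sort hA.eigenvalues)).sum_comp
    fun i => hA.eigenvalues i * hA.eigenvalues i

end Eigenvalues

section Coupling

variable {n : ℕ}

theorem transpose_mem_OE {P : Matrix (Fin n) (Fin n) ℝ} (hP : P ∈ OE n) : Pᵀ ∈ OE n :=
  ⟨by rw [transpose_transpose]; exact mul_eq_one_comm.mp hP.1, hP.2.2,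
    by rw [transpose_transpose]; exact hP.2.1⟩

theorem permMatrix_mem_OE (σ : Equiv.Perm (Fin n)) : σ.permMatrix ℝ ∈ OE n :=
  ⟨by rw [transpose_permMatrix, ← permMatrix_mul, mul_inv_cancel, permMatrix_one],
    by rw [permMatrix_mulVec]; rfl, by rw [transpose_permMatrix, permMatrix_mulVec]; rfl⟩

theorem trace_mul_conj_le (C : Matrix (Fin n) (Fin n) ℝ) {D Q : Matrix (Fin n) (Fin n) ℝ}
    (hD : D.IsHermitian) (hQ : Qᵀ * Q = 1) :
    trace (C * Q * D * Qᵀ) ≤ (frobSq C + frobSq D) / 2 := by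
  have hDt : Dᵀ = D := (conjTranspose_eq_transpose_of_trivial D).symm.trans hD
  have hsymm : (Q * D * Qᵀ)ᵀ = Q * D * Qᵀ := by
    rw [transpose_mul, transpose_mul, transpose_transpose, hDt, Matrix.mul_assoc]
  have hfrob : frobSq (Q * D * Qᵀ) = frobSq D := by
    simpa using frobSq_transpose_mul_mul (P := Qᵀ) (by rwa [transpose_transpose]) D
  calc trace (C * Q * D * Qᵀ) = trace (C * (Q * D * Qᵀ)ᵀ) := by
        rw [hsymm]; simp only [Matrix.mul_assoc]
    _ ≤ (frobSq C + frobSq (Q * D * Qᵀ)) / 2 := trace_mul_transpose_le _ _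
    _ = (frobSq C + frobSq D) / 2 := by rw [hfrob]

theorem sSup_trace_conj_eq_frobSq {S : Set (Matrix (Fin n) (Fin n) ℝ)}
    (hS : ∀ Q ∈ S, Qᵀ * Q = 1) {D P : Matrix (Fin n) (Fin n) ℝ} (hD : D.IsHermitian)
    (hP : Pᵀ ∈ S) :
    sSup ((fun Q => trace (Pᵀ * D * P * Q * D * Qᵀ)) '' S) = frobSq D := by
  have hPPt : P * Pᵀ = 1 := by simpa using hS _ hP
  have hDt : Dᵀ = D := (conjTranspose_eq_transpose_of_trivial D).symm.trans hD
  have hattained : trace (Pᵀ * D * P * Pᵀ * D * Pᵀᵀ) = frobSq D := by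
    rw [transpose_transpose, frobSq_eq_trace, hDt]
    simp only [Matrix.mul_assoc]
    rw [← Matrix.mul_assoc P Pᵀ, hPPt, Matrix.one_mul, trace_mul_comm, Matrix.mul_assoc,
      Matrix.mul_assoc, hPPt, Matrix.mul_one]
  refine IsGreatest.csSup_eq ⟨⟨Pᵀ, hP, hattained⟩, ?_⟩
  rintro _ ⟨Q, hQ, rfl⟩
  calc trace (Pᵀ * D * P * Q * D * Qᵀ) ≤ (frobSq (Pᵀ * D * P) + frobSq D) / 2 :=
        trace_mul_conj_le _ hD (hS Q hQ)
    _ = frobSq D := by rw [frobSq_transpose_mul_mul hPPt]; ring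

theorem OGW_conj_eq_zero {D P : Matrix (Fin n) (Fin n) ℝ} (hD : D.IsHermitian) (hP : P ∈ OE n) :
    OGW n (Pᵀ * D * P) D = 0 := by
  rw [OGW, sSup_trace_conj_eq_frobSq (fun Q hQ => hQ.1) hD (transpose_mem_OE hP),
    frobSq_transpose_mul_mul (mul_eq_one_comm.mp hP.1)]
  ring

theorem OGWo_conj_eq_zero {D P : Matrix (Fin n) (Fin n) ℝ} (hD : D.IsHermitian)
    (hP : Pᵀ * P = 1) : OGWo n (Pᵀ * D * P) D = 0 := by
  have hPt : Pᵀᵀ * Pᵀ = 1 := by rw [transpose_transpose]; exact mul_eq_one_comm.mp hP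
  rw [OGWo, sSup_trace_conj_eq_frobSq (S := {Q | Qᵀ * Q = 1}) (fun Q hQ => hQ) hD hPt,
    frobSq_transpose_mul_mul (mul_eq_one_comm.mp hP)]
  ring

theorem OGWlb_conj_eq_zero {D P : Matrix (Fin n) (Fin n) ℝ} {V : Matrix (Fin n) (Fin (n - 1)) ℝ}
    (hD : D.IsHermitian) (hP : Pᵀ * P = 1) (hP1 : P *ᵥ 1 = 1) (hV1 : Vᵀ *ᵥ 1 = 0)
    (hV2 : Vᵀ * V = 1) : OGWlb V (Pᵀ * D * P) D (conjHerm P hD) hD = 0 := by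
  rcases n.eq_zero_or_pos with rfl | hn
  · simp [OGWlb]
  have hproj : V * Vᵀ = 1 - (n : ℝ)⁻¹ • vecMulVec 1 1 := by
    simpa using mul_transpose_eq_one_sub_smul_vecMulVec_one hV1 hV2 (by simp; omega)
  have hPPt : P * Pᵀ = 1 := mul_eq_one_comm.mp hP
  have hconj : P * (V * Vᵀ) * Pᵀ = V * Vᵀ := by
    rw [hproj, mul_sub, sub_mul, Matrix.mul_one, hPPt, mul_smul_comm, smul_mul_assoc,
      mul_vecMulVec_one_mul_transpose hP1]
  have heig : ∑ i, eigDesc (conjHerm V (conjHerm P hD)) i * eigDesc (conjHerm V hD) i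
      = frobSq (Vᵀ * D * V) := by
    rw [eigDesc_eq_of_charpoly_eq (conjHerm V (conjHerm P hD)) (conjHerm V hD)
      (charpoly_transpose_mul_conj_mul hconj D), sum_eigDesc_mul_self]
  have hnorm : vnorm ((Vᵀ * (Pᵀ * D * P)) *ᵥ 1) = vnorm ((Vᵀ * D) *ᵥ 1) := by
    rw [show (Vᵀ * (Pᵀ * D * P)) *ᵥ 1 = (P * V)ᵀ *ᵥ (D *ᵥ 1) by
        simp only [← mulVec_mulVec, hP1, transpose_mul],
      ← mulVec_mulVec, vnorm_transpose_mulVec, vnorm_transpose_mulVec, transpose_mul, ← hconj]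
    simp only [Matrix.mul_assoc]
  have hsum : ∑ i, ∑ j, (Pᵀ * D * P) i j = ∑ i, ∑ j, D i j := by
    rw [← one_dotProduct_mulVec_one, ← one_dotProduct_mulVec_one]
    simp only [← mulVec_mulVec, hP1]
    rw [dotProduct_mulVec, vecMul_transpose, hP1]
  have hdec := frobSq_eq_of_mul_transpose_eq hproj D
  rw [(conjTranspose_eq_transpose_of_trivial D).symm.trans hD] at hdec
  rw [OGWlb, ← Pi.one_def, frobSq_transpose_mul_mul hPPt, heig, hnorm, hsum]
  linear_combination (2 / (n : ℝ) ^ 2) * hdec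

end Coupling

theorem OGW_zero_of_isomorphic_general (n : ℕ)
    (D : Matrix (Fin n) (Fin n) ℝ) (hD : D.IsHermitian)
    (Pm : Matrix (Fin n) (Fin n) ℝ) (hPm : ∃ σ : Equiv.Perm (Fin n), Pm = σ.permMatrix ℝ)
    (V : Matrix (Fin n) (Fin (n - 1)) ℝ)
    (hV1 : Vᵀ *ᵥ (fun _ => (1 : ℝ)) = 0) (hV2 : Vᵀ * V = 1) :
    OGW n (Pmᵀ * D * Pm) D = 0
    ∧ OGWlb V (Pmᵀ * D * Pm) D (conjHerm Pm hD) hD = 0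
    ∧ OGWo n (Pmᵀ * D * Pm) D = 0 := by
  obtain ⟨σ, rfl⟩ := hPm
  have hσ := permMatrix_mem_OE σ
  exact ⟨OGW_conj_eq_zero hD hσ, OGWlb_conj_eq_zero hD hσ.1 hσ.2.1 hV1 hV2,
    OGWo_conj_eq_zero hD hσ.1⟩

/-- If `C = Pmᵀ D Pm` for a permutation matrix `Pm` (i.e. the graphs are isomorphic), then
`OGW`, `OGW_lb` and `OGW_o` all vanish. -/
theorem OGW_zero_of_isomorphic (n : ℕ) (hn : 2 ≤ n)
    (D : Matrix (Fin n) (Fin n) ℝ) (hD : D.IsHermitian)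
    (Pm : Matrix (Fin n) (Fin n) ℝ) (hPm : ∃ σ : Equiv.Perm (Fin n), Pm = σ.permMatrix ℝ)
    (V : Matrix (Fin n) (Fin (n - 1)) ℝ)
    (hV1 : Vᵀ *ᵥ (fun _ => (1 : ℝ)) = 0) (hV2 : Vᵀ * V = 1) :
    OGW n (Pmᵀ * D * Pm) D = 0
    ∧ OGWlb V (Pmᵀ * D * Pm) D (conjHerm Pm hD) hD = 0
    ∧ OGWo n (Pmᵀ * D * Pm) D = 0 :=
  OGW_zero_of_isomorphic_general n D hD Pm hPm V hV1 hV2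

end
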